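/- arXiv:2107.00907 — 4 statements merged into one kernel-verified Lean document; each statement's English description precedes it below -/
import Mathlib

section
/- Every connected cubic graph has vertex-connectivity equal to its edge-connectivity. -/
open SimpleGraph

variable {V : Type*}

/-- The degree of a vertex (number of neighbours). -/
noncomputable def deg (G : SimpleGraph V) (v : V) : ℕ := Nat.card {w | G.Adj v w}

/-- The vertex-connectivity: the minimum number of vertices whose deletion
disconnects the graph or reduces it to at most a single vertex. -/
noncomputable def vConn (G : SimpleGraph V) : ℕ :=
  sInf {k | ∃ S : Set V, Nat.card S = k ∧
    (¬ (G.induce Sᶜ).Connected ∨ Nat.card ↥(Sᶜ) ≤ 1)}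

/-- The edge-connectivity: the minimum number of edges whose removal
disconnects the graph. -/
noncomputable def eConn (G : SimpleGraph V) : ℕ :=
  sInf {k | ∃ F : Set (Sym2 V), F ⊆ G.edgeSet ∧ Nat.card F = k ∧
    ¬ (G.deleteEdges F).Connected}

/-- closure under adjacency propagates along reachability -/
lemma reach_mem {W : Type*} {H : SimpleGraph W} {X : Set W}
    (hX : ∀ a ∈ X, ∀ b, H.Adj a b → b ∈ X) {a b : W}
    (h : H.Reachable a b) (ha : a ∈ X) : b ∈ X := by
  obtain ⟨p⟩ := h
  induction p with
  | nil => exact ha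
  | cons huv p ih => exact ih (hX _ ha _ huv)

lemma not_connected_of_partition {W : Type*} {H : SimpleGraph W} {X : Set W}
    (hXne : X.Nonempty) (hXc : Xᶜ.Nonempty)
    (hsep : ∀ a ∈ X, ∀ b ∉ X, ¬ H.Adj a b) : ¬ H.Connected := by
  intro hc
  obtain ⟨a, ha⟩ := hXne
  obtain ⟨b, hb⟩ := hXc
  exact hb (reach_mem (fun a' ha' b' hadj => by
    by_contra hb'; exact hsep a' ha' b' hb' hadj) (hc.preconnected a b) ha)

lemma partition_of_not_connected {W : Type*} {H : SimpleGraph W}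
    (hne : Nonempty W) (h : ¬ H.Connected) :
    ∃ X : Set W, X.Nonempty ∧ Xᶜ.Nonempty ∧
      ∀ a ∈ X, ∀ b ∉ X, ¬ H.Adj a b := by
  rw [connected_iff] at h
  push_neg at h
  have hp : ¬ H.Preconnected := fun hP => (not_nonempty_iff.mpr (h hP)) hne
  simp only [SimpleGraph.Preconnected, not_forall] at hp
  obtain ⟨x, y, hxy⟩ := hp
  refine ⟨{z | H.Reachable x z}, ⟨x, Reachable.refl x⟩, ⟨y, hxy⟩, ?_⟩
  intro a ha b hb hadj
  exact hb (ha.trans hadj.reachable)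

lemma induce_partition {G : SimpleGraph V} {S : Set V}
    (hne : (Sᶜ : Set V).Nonempty) (h : ¬ (G.induce Sᶜ).Connected) :
    ∃ X Y : Set V, X ∪ Y = Sᶜ ∧ Disjoint X Y ∧ X.Nonempty ∧ Y.Nonempty ∧
      ∀ a ∈ X, ∀ b ∈ Y, ¬ G.Adj a b := by
  obtain ⟨X', hX'ne, hX'c, hsep⟩ := partition_of_not_connected hne.to_subtype h
  refine ⟨Subtype.val '' X', Subtype.val '' X'ᶜ, ?_, ?_, hX'ne.image _, hX'c.image _, ?_⟩
  · rw [← Set.image_union, Set.union_compl_self, Set.image_univ, Subtype.range_coe]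
  · rw [Set.disjoint_iff]
    rintro v ⟨⟨a, ha, rfl⟩, ⟨b, hb, hba⟩⟩
    exact hb (by rwa [Subtype.val_injective hba])
  · rintro _ ⟨a, ha, rfl⟩ _ ⟨b, hb, rfl⟩ hadj
    exact hsep a ha b hb hadj

lemma induce_not_connected {G : SimpleGraph V} {S X Y : Set V}
    (hXY : X ∪ Y = Sᶜ) (hX : X.Nonempty) (hY : Y.Nonempty) (hd : Disjoint X Y)
    (hsep : ∀ a ∈ X, ∀ b ∈ Y, ¬ G.Adj a b) : ¬ (G.induce Sᶜ).Connected := by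
  obtain ⟨x, hx⟩ := hX
  obtain ⟨y, hy⟩ := hY
  have hxS : x ∈ Sᶜ := hXY ▸ Set.mem_union_left _ hx
  have hyS : y ∈ Sᶜ := hXY ▸ Set.mem_union_right _ hy
  refine not_connected_of_partition (X := {z : ↥(Sᶜ) | ↑z ∈ X}) ⟨⟨x, hxS⟩, by exact hx⟩ ⟨⟨y, hyS⟩, by exact fun hyX => hd.ne_of_mem hyX hy rfl⟩ ?_
  · rintro ⟨a, haS⟩ ha ⟨b, hbS⟩ hb hadj
    have hbY : b ∈ Y := by
      rcases (hXY ▸ hbS : b ∈ X ∪ Y) with h' | h'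
      · exact absurd h' hb
      · exact h'
    exact hsep a ha b hbY hadj

lemma deleteEdges_not_connected {G : SimpleGraph V} {F : Set (Sym2 V)} {X : Set V}
    (hX : X.Nonempty) (hXc : Xᶜ.Nonempty)
    (hsep : ∀ a ∈ X, ∀ b ∉ X, G.Adj a b → s(a, b) ∈ F) :
    ¬ (G.deleteEdges F).Connected := by
  refine not_connected_of_partition hX hXc ?_
  intro a ha b hb hadj
  rw [deleteEdges_adj] at hadj
  exact hadj.2 (hsep a ha b hb hadj.1)

section Cubic
variable [Fintype V] {G : SimpleGraph V}

omit [Fintype V] in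
lemma ncard_nbr (hcubic : ∀ v, deg G v = 3) (v : V) : (G.neighborSet v).ncard = 3 := by
  rw [← Nat.card_coe_set_eq]
  exact hcubic v

lemma nbr_fin (v : V) : (G.neighborSet v).Finite := Set.toFinite _

/-- vConn G ≤ 3 : remove the neighborhood of a vertex -/
lemma three_mem_vconn (hne : Nonempty V) (hcubic : ∀ v, deg G v = 3) :
    3 ∈ {k | ∃ S : Set V, Nat.card S = k ∧
      (¬ (G.induce Sᶜ).Connected ∨ Nat.card ↥(Sᶜ) ≤ 1)} := by
  classical
  obtain ⟨v⟩ := hne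
  refine ⟨G.neighborSet v, hcubic v, ?_⟩
  by_cases hsub : (G.neighborSet v)ᶜ ⊆ {v}
  · right
    rw [Nat.card_coe_set_eq]
    calc ((G.neighborSet v)ᶜ).ncard ≤ ({v} : Set V).ncard :=
          Set.ncard_le_ncard hsub (Set.toFinite _)
      _ = 1 := Set.ncard_singleton v
  · left
    rw [Set.not_subset] at hsub
    obtain ⟨w, hw, hwv⟩ := hsub
    refine induce_not_connected (X := {v}) (Y := (G.neighborSet v)ᶜ \ {v}) ?_
      ⟨v, rfl⟩ ⟨w, hw, hwv⟩ ?_ ?_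
    · rw [Set.union_diff_cancel']
      · simp
      · intro z hz
        simp only [Set.mem_singleton_iff] at hz
        subst hz
        simp [Set.mem_compl_iff, SimpleGraph.irrefl]
    · rw [Set.disjoint_singleton_left]
      exact fun h => h.2 rfl
    · rintro a ha b ⟨hb, -⟩ hadj
      rw [Set.mem_singleton_iff] at ha; subst ha
      exact hb hadj

/-- eConn G ≤ 3 : delete the edges at a vertex -/
lemma three_mem_econn (hne : Nonempty V) (hcubic : ∀ v, deg G v = 3) :
    3 ∈ {k | ∃ F : Set (Sym2 V), F ⊆ G.edgeSet ∧ Nat.card F = k ∧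
      ¬ (G.deleteEdges F).Connected} := by
  obtain ⟨v⟩ := hne
  have hn3 := ncard_nbr hcubic v
  obtain ⟨w, hw⟩ : (G.neighborSet v).Nonempty := by
    rw [← Set.ncard_pos (nbr_fin v), hn3]; norm_num
  refine ⟨(fun w => s(v, w)) '' G.neighborSet v, ?_, ?_, ?_⟩
  · rintro _ ⟨b, hb, rfl⟩
    exact hb
  · rw [Nat.card_coe_set_eq, Set.ncard_image_of_injective _ fun a b h =>
      (Sym2.congr_right).mp h, hn3]
  · refine deleteEdges_not_connected (X := {v}) ⟨v, rfl⟩ ⟨w, fun h => G.irrefl (h ▸ hw)⟩ ?_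
    rintro a rfl b hb hadj
    exact ⟨b, hadj, rfl⟩

lemma vconn_pos (hconn : G.Connected)
    (h : 0 ∈ {k | ∃ S : Set V, Nat.card S = k ∧
      (¬ (G.induce Sᶜ).Connected ∨ Nat.card ↥(Sᶜ) ≤ 1)}) (hcubic : ∀ v, deg G v = 3) :
    False := by
  obtain ⟨S, hS0, hS⟩ := h
  have hSempty : S = ∅ := by
    rw [Nat.card_coe_set_eq] at hS0
    exact (Set.ncard_eq_zero (Set.toFinite S)).mp hS0
  subst hSempty
  rw [Set.compl_empty] at hS
  rcases hS with h | h
  · exact h ((induceUnivIso G).connected_iff.mpr hconn)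
  · obtain ⟨v⟩ := hconn.nonempty
    have hn3 := ncard_nbr hcubic v
    obtain ⟨w, hw⟩ : (G.neighborSet v).Nonempty := by
      rw [← Set.ncard_pos (nbr_fin v), hn3]; norm_num
    have : 2 ≤ Nat.card ↥(Set.univ : Set V) := by
      rw [Nat.card_coe_set_eq]
      have : ({v, w} : Set V).ncard ≤ (Set.univ : Set V).ncard :=
        Set.ncard_le_ncard (Set.subset_univ _) (Set.toFinite _)
      rwa [Set.ncard_pair (show v ≠ w from fun h => G.irrefl (h ▸ hw))] at this
    omega

lemma four_le_n (hne : Nonempty V) (hcubic : ∀ v, deg G v = 3) :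
    4 ≤ (Set.univ : Set V).ncard := by
  obtain ⟨v⟩ := hne
  have h1 : (insert v (G.neighborSet v)).ncard = 4 := by
    rw [Set.ncard_insert_of_notMem (show v ∉ G.neighborSet v from fun h => G.irrefl h) (nbr_fin v), ncard_nbr hcubic v]
  calc 4 = (insert v (G.neighborSet v)).ncard := h1.symm
    _ ≤ (Set.univ : Set V).ncard := Set.ncard_le_ncard (Set.subset_univ _) (Set.toFinite _)

lemma nbr_split (hcubic : ∀ v, deg G v = 3) (u : V) {X Y Z : Set V}
    (hsub : G.neighborSet u ⊆ X ∪ Y ∪ Z)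
    (dXY : Disjoint X Y) (dXZ : Disjoint X Z) (dYZ : Disjoint Y Z) :
    (G.neighborSet u ∩ X).ncard + (G.neighborSet u ∩ Y).ncard
      + (G.neighborSet u ∩ Z).ncard = 3 := by
  have hN : G.neighborSet u = (G.neighborSet u ∩ X) ∪
      ((G.neighborSet u ∩ Y) ∪ (G.neighborSet u ∩ Z)) := by
    ext w
    constructor
    · intro hw
      have := hsub hw
      simp only [Set.mem_union] at this ⊢
      simp only [Set.mem_inter_iff]
      tauto
    · intro hw
      simp only [Set.mem_union, Set.mem_inter_iff] at hw
      tauto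
  have d1 : Disjoint (G.neighborSet u ∩ Y) (G.neighborSet u ∩ Z) :=
    dYZ.mono Set.inter_subset_right Set.inter_subset_right
  have d2 : Disjoint (G.neighborSet u ∩ X)
      ((G.neighborSet u ∩ Y) ∪ (G.neighborSet u ∩ Z)) := by
    rw [Set.disjoint_union_right]
    exact ⟨dXY.mono Set.inter_subset_right Set.inter_subset_right,
      dXZ.mono Set.inter_subset_right Set.inter_subset_right⟩
  have := ncard_nbr hcubic u
  rw [hN, Set.ncard_union_eq d2 (Set.toFinite _) (Set.toFinite _),
    Set.ncard_union_eq d1 (Set.toFinite _) (Set.toFinite _)] at this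
  omega

omit [Fintype V] in
lemma nbr_inter_singleton_adj {u v : V} (h : G.Adj u v) :
    G.neighborSet u ∩ {v} = {v} := by
  ext w; simp only [Set.mem_inter_iff, Set.mem_singleton_iff, mem_neighborSet]
  exact ⟨fun hw => hw.2, fun hw => ⟨hw ▸ h, hw⟩⟩

omit [Fintype V] in
lemma nbr_inter_singleton_nadj {u v : V} (h : ¬ G.Adj u v) :
    G.neighborSet u ∩ {v} = ∅ := by
  rw [Set.eq_empty_iff_forall_notMem]
  rintro w ⟨hw, rfl⟩; exact h hw

omit [Fintype V] in
/-- extract a neighbour avoiding one forbidden vertex -/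
lemma exists_nbr_ne (hcubic : ∀ v, deg G v = 3) (u b : V) :
    ∃ w, G.Adj u w ∧ w ≠ b := by
  by_contra h
  push_neg at h
  have hsub : G.neighborSet u ⊆ {b} := fun w hw => (h w hw)
  have := Set.ncard_le_ncard hsub (Set.toFinite _)
  rw [ncard_nbr hcubic u, Set.ncard_singleton] at this
  omega

/-- from a bridge, a cut vertex -/
lemma one_mem_vconn (hconn : G.Connected) (hcubic : ∀ v, deg G v = 3)
    (h1 : 1 ∈ {k | ∃ F : Set (Sym2 V), F ⊆ G.edgeSet ∧ Nat.card F = k ∧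
      ¬ (G.deleteEdges F).Connected}) :
    1 ∈ {k | ∃ S : Set V, Nat.card S = k ∧
      (¬ (G.induce Sᶜ).Connected ∨ Nat.card ↥(Sᶜ) ≤ 1)} := by
  obtain ⟨F, hFsub, hF1, hFdisc⟩ := h1
  rw [Nat.card_coe_set_eq, Set.ncard_eq_one] at hF1
  obtain ⟨e, rfl⟩ := hF1
  obtain ⟨X, hXne, hXcne, hsep⟩ := partition_of_not_connected hconn.nonempty hFdisc
  have hcross : ∀ x ∈ X, ∀ y ∉ X, G.Adj x y → s(x, y) = e := by
    intro x hx y hy hadj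
    have := hsep x hx y hy
    rw [deleteEdges_adj] at this
    push_neg at this
    simpa using this hadj
  -- there is a crossing edge since G is connected
  have hex : ∃ x ∈ X, ∃ y ∉ X, G.Adj x y := by
    by_contra h
    push_neg at h
    exact (not_connected_of_partition hXne hXcne h) hconn
  obtain ⟨x₀, hx₀, y₀, hy₀, hxy₀⟩ := hex
  have he : e = s(x₀, y₀) := (hcross x₀ hx₀ y₀ hy₀ hxy₀).symm
  refine ⟨{x₀}, by rw [Nat.card_coe_set_eq, Set.ncard_singleton], Or.inl ?_⟩
  obtain ⟨w, hwadj, hwne⟩ := exists_nbr_ne hcubic x₀ y₀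
  have hwX : w ∈ X := by
    by_contra hwX
    have := hcross x₀ hx₀ w hwX hwadj
    rw [he, Sym2.congr_right] at this
    exact hwne this
  refine induce_not_connected (X := X \ {x₀}) (Y := Xᶜ) ?_ ⟨w, hwX, fun h => G.irrefl (h ▸ hwadj)⟩
    hXcne ?_ ?_
  · ext z
    simp only [Set.mem_union, Set.mem_diff, Set.mem_singleton_iff, Set.mem_compl_iff]
    by_cases hz : z ∈ X
    · constructor
      · rintro (⟨-, h⟩ | h)
        · exact h
        · exact absurd hz h
      · intro h; exact Or.inl ⟨hz, h⟩
    · constructor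
      · rintro (⟨h, -⟩ | -)
        · exact absurd h hz
        · intro h; subst h; exact hz hx₀
      · intro _; exact Or.inr hz
  · exact Disjoint.mono_left Set.diff_subset disjoint_compl_right
  · rintro a ⟨haX, hax₀⟩ b hb hadj
    have := hcross a haX b (fun h => hb h) hadj
    rw [he, Sym2.eq_iff] at this
    rcases this with ⟨h1, h2⟩ | ⟨h1, h2⟩
    · exact hax₀ h1
    · subst h2; exact hb hx₀

set_option linter.unusedSectionVars false

lemma two_mem_vconn (hconn : G.Connected) (hcubic : ∀ v, deg G v = 3)
    (h2 : 2 ∈ {k | ∃ F : Set (Sym2 V), F ⊆ G.edgeSet ∧ Nat.card F = k ∧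
      ¬ (G.deleteEdges F).Connected})
    (h1 : 1 ∉ {k | ∃ F : Set (Sym2 V), F ⊆ G.edgeSet ∧ Nat.card F = k ∧
      ¬ (G.deleteEdges F).Connected}) :
    2 ∈ {k | ∃ S : Set V, Nat.card S = k ∧
      (¬ (G.induce Sᶜ).Connected ∨ Nat.card ↥(Sᶜ) ≤ 1)} := by
  obtain ⟨F, hFsub, hF2, hFdisc⟩ := h2
  rw [Nat.card_coe_set_eq, Set.ncard_eq_two] at hF2
  obtain ⟨e, f, hef, rfl⟩ := hF2
  obtain ⟨X, hXne, hXcne, hsep⟩ := partition_of_not_connected hconn.nonempty hFdisc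
  have hcross : ∀ x ∈ X, ∀ y ∉ X, G.Adj x y → s(x, y) ∈ ({e, f} : Set (Sym2 V)) := by
    intro x hx y hy hadj
    have := hsep x hx y hy
    rw [deleteEdges_adj] at this
    push_neg at this
    exact this hadj
  -- each of e, f appears as a crossing edge
  have key : ∀ g g' : Sym2 V, ({g, g'} : Set (Sym2 V)) = {e, f} → g' ∈ G.edgeSet →
      ∃ x ∈ X, ∃ y ∉ X, s(x, y) = g := by
    intro g g' hgg' hg'
    by_contra h
    push_neg at h
    refine h1 ⟨{g'}, Set.singleton_subset_iff.mpr hg', by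
        rw [Nat.card_coe_set_eq, Set.ncard_singleton], ?_⟩
    refine deleteEdges_not_connected hXne hXcne ?_
    intro a ha b hb hadj
    have hm := hcross a ha b hb hadj
    rw [← hgg'] at hm
    rcases hm with hm | hm
    · exact absurd hm (h a ha b hb)
    · exact hm
  have hef' : ({f, e} : Set (Sym2 V)) = {e, f} := Set.pair_comm f e
  obtain ⟨a₁, ha₁, b₁, hb₁, he⟩ := key e f rfl (hFsub (by simp))
  obtain ⟨a₂, ha₂, b₂, hb₂, hf⟩ := key f e hef' (hFsub (by simp))
  have hab : a₁ ≠ b₂ := fun h => hb₂ (h ▸ ha₁)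
  refine ⟨{a₁, b₂}, by rw [Nat.card_coe_set_eq, Set.ncard_pair hab], Or.inl ?_⟩
  have hcross' : ∀ x ∈ X, ∀ y ∉ X, G.Adj x y →
      s(x, y) = s(a₁, b₁) ∨ s(x, y) = s(a₂, b₂) := by
    intro x hx y hy hadj
    have hm := hcross x hx y hy hadj
    simp only [Set.mem_insert_iff, Set.mem_singleton_iff] at hm
    rcases hm with hm | hm
    · exact Or.inl (hm.trans he.symm)
    · exact Or.inr (hm.trans hf.symm)
  have hXne' : (X \ {a₁}).Nonempty := by
    by_contra h
    rw [Set.not_nonempty_iff_eq_empty, Set.diff_eq_empty] at h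
    have hsub : G.neighborSet a₁ ⊆ {b₁, b₂} := by
      intro w hw
      rw [mem_neighborSet] at hw
      have hwX : w ∉ X := fun hwX => G.irrefl ((Set.eq_of_mem_singleton (h hwX)) ▸ hw)
      rcases hcross' a₁ ha₁ w hwX hw with hm | hm <;> rw [Sym2.eq_iff] at hm
      · rcases hm with ⟨-, rfl⟩ | ⟨h1, -⟩
        · exact Set.mem_insert _ _
        · exact absurd (h1 ▸ ha₁) hb₁
      · rcases hm with ⟨h1, rfl⟩ | ⟨h1, rfl⟩
        · exact Set.mem_insert_of_mem _ rfl
        · exact absurd (h1 ▸ ha₁) hb₂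
    have hle := Set.ncard_le_ncard hsub (Set.toFinite _)
    rw [ncard_nbr hcubic a₁] at hle
    have : ({b₁, b₂} : Set V).ncard ≤ 2 := Set.ncard_insert_le _ _ |>.trans (by
      rw [Set.ncard_singleton])
    omega
  have hXcne' : (Xᶜ \ {b₂}).Nonempty := by
    by_contra h
    rw [Set.not_nonempty_iff_eq_empty, Set.diff_eq_empty] at h
    have hsub : G.neighborSet b₂ ⊆ {a₁, a₂} := by
      intro w hw
      rw [mem_neighborSet] at hw
      have hwX : w ∈ X := by
        by_contra hwX
        exact G.irrefl ((Set.eq_of_mem_singleton (h hwX)) ▸ hw)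
      rcases hcross' w hwX b₂ hb₂ hw.symm with hm | hm <;> rw [Sym2.eq_iff] at hm
      · rcases hm with ⟨rfl, h2⟩ | ⟨rfl, h2⟩
        · exact Set.mem_insert _ _
        · exact absurd (h2 ▸ ha₁) hb₂
      · rcases hm with ⟨rfl, -⟩ | ⟨rfl, h2⟩
        · exact Set.mem_insert_of_mem _ rfl
        · exact absurd ha₂ (h2 ▸ hb₂)
    have hle := Set.ncard_le_ncard hsub (Set.toFinite _)
    rw [ncard_nbr hcubic b₂] at hle
    have : ({a₁, a₂} : Set V).ncard ≤ 2 := Set.ncard_insert_le _ _ |>.trans (by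
      rw [Set.ncard_singleton])
    omega
  refine induce_not_connected (X := X \ {a₁}) (Y := Xᶜ \ {b₂}) ?_ hXne' hXcne' ?_ ?_
  · ext z
    simp only [Set.mem_union, Set.mem_diff, Set.mem_singleton_iff, Set.mem_compl_iff,
      Set.mem_insert_iff, not_or]
    by_cases hz : z ∈ X
    · have h1 : z ≠ b₂ := fun h => hb₂ (h ▸ hz)
      tauto
    · have h1 : z ≠ a₁ := fun h => hz (h ▸ ha₁)
      tauto
  · exact Disjoint.mono Set.diff_subset Set.diff_subset disjoint_compl_right
  · rintro x ⟨hx, hxa⟩ y ⟨hy, hyb⟩ hadj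
    rcases hcross' x hx y hy hadj with hm | hm <;> rw [Sym2.eq_iff] at hm
    · rcases hm with ⟨h1, -⟩ | ⟨-, h2⟩
      · exact hxa h1
      · exact hy (h2 ▸ ha₁)
    · rcases hm with ⟨h1, h2⟩ | ⟨h1, h2⟩
      · exact hyb h2
      · exact hb₂ (h1 ▸ hx)

/-- a cut vertex yields a bridge -/
lemma one_mem_econn (hconn : G.Connected) (hcubic : ∀ v, deg G v = 3)
    (h1 : 1 ∈ {k | ∃ S : Set V, Nat.card S = k ∧
      (¬ (G.induce Sᶜ).Connected ∨ Nat.card ↥(Sᶜ) ≤ 1)}) :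
    1 ∈ {k | ∃ F : Set (Sym2 V), F ⊆ G.edgeSet ∧ Nat.card F = k ∧
      ¬ (G.deleteEdges F).Connected} := by
  obtain ⟨S, hScard, hS⟩ := h1
  rw [Nat.card_coe_set_eq, Set.ncard_eq_one] at hScard
  obtain ⟨v, rfl⟩ := hScard
  have hn4 := four_le_n hconn.nonempty hcubic
  have hcompl : ({v} : Set V).ncard + (({v} : Set V)ᶜ).ncard = (Set.univ : Set V).ncard := by
    rw [Set.ncard_add_ncard_compl]; exact (Set.ncard_univ V).symm
  rw [Set.ncard_singleton] at hcompl
  have hSc2 : 2 ≤ (({v} : Set V)ᶜ).ncard := by omega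
  rcases hS with hS | hS
  swap
  · rw [Nat.card_coe_set_eq] at hS; omega
  have hScne : (({v} : Set V)ᶜ).Nonempty := by
    rw [← Set.ncard_pos (Set.toFinite _)]; omega
  obtain ⟨X, Y, hXY, hd, hX, hY, hsep⟩ := induce_partition hScne hS
  -- counting
  have hNsub : G.neighborSet v ⊆ X ∪ Y ∪ (∅ : Set V) := by
    intro w hw
    rw [Set.union_empty, hXY]
    exact fun h => G.irrefl ((Set.eq_of_mem_singleton h) ▸ hw)
  have hcount := nbr_split hcubic v hNsub hd (Set.disjoint_empty X) (Set.disjoint_empty Y)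
  rw [Set.inter_empty, Set.ncard_empty] at hcount
  -- both sides have a neighbour of v
  have hpos : ∀ X' Y' : Set V, X' ∪ Y' = ({v} : Set V)ᶜ → X'.Nonempty →
      (∀ a ∈ X', ∀ b ∈ Y', ¬ G.Adj a b) → (G.neighborSet v ∩ X').Nonempty := by
    intro X' Y' hXY' hX' hsep'
    by_contra h
    rw [Set.not_nonempty_iff_eq_empty] at h
    refine (not_connected_of_partition hX' ?_ ?_) hconn
    · refine ⟨v, fun hv => ?_⟩
      have : v ∈ ({v} : Set V)ᶜ := hXY' ▸ Set.mem_union_left _ hv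
      exact this rfl
    · intro a ha b hb hadj
      by_cases hbv : b = v
      · subst hbv
        have : a ∈ G.neighborSet b ∩ X' := ⟨hadj.symm, ha⟩
        rw [h] at this
        exact this
      · have hbm : b ∈ X' ∪ Y' := hXY' ▸ (fun h' => hbv (Set.eq_of_mem_singleton h'))
        rcases hbm with h' | h'
        · exact hb h'
        · exact hsep' a ha b h' hadj
  have hsep' : ∀ a ∈ Y, ∀ b ∈ X, ¬ G.Adj a b := fun a ha b hb hadj => hsep b hb a ha hadj.symm
  have haX := hpos X Y hXY hX hsep
  have haY := hpos Y X (by rw [Set.union_comm]; exact hXY) hY hsep'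
  rw [← Set.ncard_pos (Set.toFinite _)] at haX haY
  -- one side has exactly one neighbour; cut that edge
  have hcut : ∀ X' Y' : Set V, X' ∪ Y' = ({v} : Set V)ᶜ → Disjoint X' Y' →
      (∀ a ∈ X', ∀ b ∈ Y', ¬ G.Adj a b) → (G.neighborSet v ∩ X').ncard = 1 →
      1 ∈ {k | ∃ F : Set (Sym2 V), F ⊆ G.edgeSet ∧ Nat.card F = k ∧
        ¬ (G.deleteEdges F).Connected} := by
    intro X' Y' hXY' hd' hsep' hone
    rw [Set.ncard_eq_one] at hone
    obtain ⟨x₀, hx₀⟩ := hone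
    have hx₀m : x₀ ∈ G.neighborSet v ∩ X' := hx₀ ▸ rfl
    refine ⟨{s(v, x₀)}, Set.singleton_subset_iff.mpr hx₀m.1,
      by rw [Nat.card_coe_set_eq, Set.ncard_singleton], ?_⟩
    refine deleteEdges_not_connected (X := X') ⟨x₀, hx₀m.2⟩ ⟨v, fun hv => ?_⟩ ?_
    · have : v ∈ ({v} : Set V)ᶜ := hXY' ▸ Set.mem_union_left _ hv
      exact this rfl
    · intro a ha b hb hadj
      by_cases hbv : b = v
      · subst hbv
        have : a ∈ G.neighborSet b ∩ X' := ⟨hadj.symm, ha⟩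
        rw [hx₀] at this
        rw [Set.eq_of_mem_singleton this, Set.mem_singleton_iff, Sym2.eq_swap]
      · have hbm : b ∈ X' ∪ Y' := hXY' ▸ (fun h' => hbv (Set.eq_of_mem_singleton h'))
        rcases hbm with h' | h'
        · exact absurd h' hb
        · exact absurd hadj (hsep' a ha b h')
  by_cases hone : (G.neighborSet v ∩ X).ncard = 1
  · exact hcut X Y hXY hd hsep hone
  · have : (G.neighborSet v ∩ Y).ncard = 1 := by omega
    exact hcut Y X (by rw [Set.union_comm]; exact hXY) hd.symm hsep' this

lemma pos2 {u v : V} {X Y : Set V} (huv : u ≠ v)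
    (hXY : X ∪ Y = ({u, v} : Set V)ᶜ) (hd : Disjoint X Y)
    (hX : X.Nonempty) (hY : Y.Nonempty)
    (hsep : ∀ a ∈ X, ∀ b ∈ Y, ¬ G.Adj a b)
    (hempty : G.neighborSet u ∩ X = ∅) :
    1 ∈ {k | ∃ S : Set V, Nat.card S = k ∧
      (¬ (G.induce Sᶜ).Connected ∨ Nat.card ↥(Sᶜ) ≤ 1)} := by
  have huc : u ∉ X ∪ Y := by
    rw [hXY]; exact fun h => h (Set.mem_insert _ _)
  have hvc : v ∉ X ∪ Y := by
    rw [hXY]; exact fun h => h (Set.mem_insert_of_mem _ rfl)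
  refine ⟨{v}, by rw [Nat.card_coe_set_eq, Set.ncard_singleton], Or.inl ?_⟩
  refine induce_not_connected (X := X) (Y := Y ∪ {u}) ?_ hX
    (hY.mono Set.subset_union_left) ?_ ?_
  · ext z
    simp only [Set.mem_union, Set.mem_singleton_iff, Set.mem_compl_iff]
    constructor
    · rintro (h | h | rfl)
      · intro hzv; subst hzv
        exact hvc (Set.mem_union_left _ h)
      · intro hzv; subst hzv
        exact hvc (Set.mem_union_right _ h)
      · exact fun h => huv (Set.eq_of_mem_singleton h)
    · intro hz
      by_cases hzu : z = u
      · exact Or.inr (Or.inr hzu)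
      · have hm : z ∈ X ∪ Y := by
          rw [hXY]
          intro h
          rcases h with h | h
          · exact hzu h
          · exact hz h
        rw [Set.mem_union] at hm
        rcases hm with h | h
        · exact Or.inl h
        · exact Or.inr (Or.inl h)
  · rw [Set.disjoint_union_right]
    refine ⟨hd, Set.disjoint_singleton_right.mpr (fun h => huc (Set.mem_union_left _ h))⟩
  · rintro a ha b (hb | hb) hadj
    · exact hsep a ha b hb hadj
    · rw [Set.eq_of_mem_singleton hb] at hadj
      have : a ∈ G.neighborSet u ∩ X := ⟨hadj.symm, ha⟩
      rw [hempty] at this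
      exact this

lemma cut_same {u v : V} {X Y : Set V} {xu xv : V} (huv : u ≠ v)
    (hXY : X ∪ Y = ({u, v} : Set V)ᶜ)
    (hX : X.Nonempty)
    (hsep : ∀ a ∈ X, ∀ b ∈ Y, ¬ G.Adj a b)
    (hu : G.neighborSet u ∩ X = {xu}) (hv : G.neighborSet v ∩ X = {xv}) :
    2 ∈ {k | ∃ F : Set (Sym2 V), F ⊆ G.edgeSet ∧ Nat.card F = k ∧
      ¬ (G.deleteEdges F).Connected} := by
  have hxum : xu ∈ G.neighborSet u ∩ X := hu ▸ rfl
  have hxvm : xv ∈ G.neighborSet v ∩ X := hv ▸ rfl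
  have huX : u ∉ X := fun h => by
    have : u ∈ ({u, v} : Set V)ᶜ := hXY ▸ Set.mem_union_left _ h
    exact this (Set.mem_insert _ _)
  have hvX : v ∉ X := fun h => by
    have : v ∈ ({u, v} : Set V)ᶜ := hXY ▸ Set.mem_union_left _ h
    exact this (Set.mem_insert_of_mem _ rfl)
  have hne : s(u, xu) ≠ s(v, xv) := by
    intro h
    rw [Sym2.eq_iff] at h
    rcases h with ⟨h1, -⟩ | ⟨h1, -⟩
    · exact huv h1
    · exact huX (h1 ▸ hxvm.2)
  refine ⟨{s(u, xu), s(v, xv)}, ?_, ?_, ?_⟩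
  · rintro g (rfl | rfl)
    · exact hxum.1
    · exact hxvm.1
  · rw [Nat.card_coe_set_eq, Set.ncard_pair hne]
  · refine deleteEdges_not_connected (X := X) ⟨xu, hxum.2⟩ ⟨u, huX⟩ ?_
    intro a ha b hb hadj
    have hbm : b ∈ Y ∨ b = u ∨ b = v := by
      by_cases h' : b ∈ ({u, v} : Set V)
      · rcases h' with h' | h'
        · exact Or.inr (Or.inl h')
        · exact Or.inr (Or.inr h')
      · have : b ∈ X ∪ Y := hXY ▸ h'
        rcases this with h' | h'
        · exact absurd h' hb
        · exact Or.inl h'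
    rcases hbm with h' | rfl | rfl
    · exact absurd hadj (hsep a ha b h')
    · have : a ∈ G.neighborSet b ∩ X := ⟨hadj.symm, ha⟩
      rw [hu] at this
      rw [Set.eq_of_mem_singleton this]
      exact Set.mem_insert_iff.mpr (Or.inl Sym2.eq_swap)
    · have : a ∈ G.neighborSet b ∩ X := ⟨hadj.symm, ha⟩
      rw [hv] at this
      rw [Set.eq_of_mem_singleton this]
      exact Set.mem_insert_iff.mpr (Or.inr (Set.mem_singleton_iff.mpr Sym2.eq_swap))

lemma cut_mixed {u v : V} {X Y : Set V} {xu yv : V} (huv : u ≠ v)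
    (hXY : X ∪ Y = ({u, v} : Set V)ᶜ)
    (hX : X.Nonempty)
    (hsep : ∀ a ∈ X, ∀ b ∈ Y, ¬ G.Adj a b) (hnadj : ¬ G.Adj u v)
    (hu : G.neighborSet u ∩ X = {xu}) (hv : G.neighborSet v ∩ Y = {yv}) :
    2 ∈ {k | ∃ F : Set (Sym2 V), F ⊆ G.edgeSet ∧ Nat.card F = k ∧
      ¬ (G.deleteEdges F).Connected} := by
  have hxum : xu ∈ G.neighborSet u ∩ X := hu ▸ rfl
  have hyvm : yv ∈ G.neighborSet v ∩ Y := hv ▸ rfl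
  have huX : u ∉ X ∪ Y := by
    rw [hXY]; exact fun h => h (Set.mem_insert _ _)
  have hvX : v ∉ X ∪ Y := by
    rw [hXY]; exact fun h => h (Set.mem_insert_of_mem _ rfl)
  have hne : s(u, xu) ≠ s(v, yv) := by
    intro h
    rw [Sym2.eq_iff] at h
    rcases h with ⟨h1, -⟩ | ⟨h1, -⟩
    · exact huv h1
    · exact huX (Set.mem_union_right _ (h1 ▸ hyvm.2))
  refine ⟨{s(u, xu), s(v, yv)}, ?_, ?_, ?_⟩
  · rintro g (rfl | rfl)
    · exact hxum.1
    · exact hyvm.1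
  · rw [Nat.card_coe_set_eq, Set.ncard_pair hne]
  · refine deleteEdges_not_connected (X := X ∪ {v})
      ⟨xu, Set.mem_union_left _ hxum.2⟩
      ⟨u, fun h => ?_⟩ ?_
    · rcases h with h | h
      · exact huX (Set.mem_union_left _ h)
      · exact huv (Set.eq_of_mem_singleton h)
    · rintro a (ha | ha) b hb hadj
      · -- a ∈ X
        have hbm : b ∈ Y ∨ b = u := by
          by_cases h' : b ∈ ({u, v} : Set V)
          · rcases h' with h' | h'
            · exact Or.inr h'
            · exact absurd (Set.mem_union_right _ (Set.mem_singleton_iff.mpr h'))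
                (fun hh => hb hh)
          · have : b ∈ X ∪ Y := hXY ▸ h'
            rcases this with h' | h'
            · exact absurd (Set.mem_union_left _ h') hb
            · exact Or.inl h'
        rcases hbm with h' | rfl
        · exact absurd hadj (hsep a ha b h')
        · have : a ∈ G.neighborSet b ∩ X := ⟨hadj.symm, ha⟩
          rw [hu] at this
          rw [Set.eq_of_mem_singleton this]
          exact Set.mem_insert_iff.mpr (Or.inl Sym2.eq_swap)
      · -- a = v
        rw [Set.eq_of_mem_singleton ha] at hadj ⊢
        have hbm : b ∈ Y ∨ b = u := by
          by_cases h' : b ∈ ({u, v} : Set V)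
          · rcases h' with h' | h'
            · exact Or.inr h'
            · exact absurd (Set.mem_union_right _ (Set.mem_singleton_iff.mpr h'))
                (fun hh => hb hh)
          · have : b ∈ X ∪ Y := hXY ▸ h'
            rcases this with h' | h'
            · exact absurd (Set.mem_union_left _ h') hb
            · exact Or.inl h'
        rcases hbm with h' | rfl
        · have : b ∈ G.neighborSet v ∩ Y := ⟨hadj, h'⟩
          rw [hv] at this
          rw [Set.eq_of_mem_singleton this]
          exact Set.mem_insert_iff.mpr (Or.inr rfl)
        · exact absurd hadj.symm hnadj

lemma two_mem_econn (hconn : G.Connected) (hcubic : ∀ v, deg G v = 3)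
    (h2 : 2 ∈ {k | ∃ S : Set V, Nat.card S = k ∧
      (¬ (G.induce Sᶜ).Connected ∨ Nat.card ↥(Sᶜ) ≤ 1)})
    (h1 : 1 ∉ {k | ∃ S : Set V, Nat.card S = k ∧
      (¬ (G.induce Sᶜ).Connected ∨ Nat.card ↥(Sᶜ) ≤ 1)}) :
    2 ∈ {k | ∃ F : Set (Sym2 V), F ⊆ G.edgeSet ∧ Nat.card F = k ∧
      ¬ (G.deleteEdges F).Connected} := by
  obtain ⟨S, hScard, hS⟩ := h2
  rw [Nat.card_coe_set_eq, Set.ncard_eq_two] at hScard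
  obtain ⟨u, v, huv, rfl⟩ := hScard
  have hn4 := four_le_n hconn.nonempty hcubic
  have hcompl : ({u, v} : Set V).ncard + (({u, v} : Set V)ᶜ).ncard
      = (Set.univ : Set V).ncard := by
    rw [Set.ncard_add_ncard_compl]; exact (Set.ncard_univ V).symm
  rw [Set.ncard_pair huv] at hcompl
  rcases hS with hS | hS
  swap
  · rw [Nat.card_coe_set_eq] at hS; omega
  have hScne : (({u, v} : Set V)ᶜ).Nonempty := by
    rw [← Set.ncard_pos (Set.toFinite _)]; omega
  obtain ⟨X, Y, hXY, hd, hX, hY, hsep⟩ := induce_partition hScne hS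
  have hXsub : X ⊆ ({u, v} : Set V)ᶜ := hXY ▸ Set.subset_union_left
  have hYsub : Y ⊆ ({u, v} : Set V)ᶜ := hXY ▸ Set.subset_union_right
  have hvX : Disjoint X ({v} : Set V) :=
    Set.disjoint_singleton_right.mpr (fun h => (hXsub h) (Set.mem_insert_of_mem _ rfl))
  have hvY : Disjoint Y ({v} : Set V) :=
    Set.disjoint_singleton_right.mpr (fun h => (hYsub h) (Set.mem_insert_of_mem _ rfl))
  have huX : Disjoint X ({u} : Set V) :=
    Set.disjoint_singleton_right.mpr (fun h => (hXsub h) (Set.mem_insert _ _))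
  have huY : Disjoint Y ({u} : Set V) :=
    Set.disjoint_singleton_right.mpr (fun h => (hYsub h) (Set.mem_insert _ _))
  have hNu : G.neighborSet u ⊆ X ∪ Y ∪ ({v} : Set V) := by
    intro w hw
    rw [mem_neighborSet] at hw
    by_cases h' : w ∈ ({u, v} : Set V)
    · rcases h' with h' | h'
      · exact absurd (h' ▸ hw) (G.irrefl)
      · exact Set.mem_union_right _ h'
    · exact Set.mem_union_left _ (hXY ▸ h')
  have hNv : G.neighborSet v ⊆ X ∪ Y ∪ ({u} : Set V) := by
    intro w hw
    rw [mem_neighborSet] at hw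
    by_cases h' : w ∈ ({u, v} : Set V)
    · rcases h' with h' | h'
      · exact Set.mem_union_right _ h'
      · exact absurd (h' ▸ hw) (G.irrefl)
    · exact Set.mem_union_left _ (hXY ▸ h')
  have hcu := nbr_split hcubic u hNu hd hvX hvY
  have hcv := nbr_split hcubic v hNv hd huX huY
  have htu : (G.neighborSet u ∩ {v}).ncard ≤ 1 := by
    calc (G.neighborSet u ∩ {v}).ncard ≤ ({v} : Set V).ncard :=
          Set.ncard_le_ncard Set.inter_subset_right (Set.toFinite _)
      _ = 1 := Set.ncard_singleton v
  have htv : (G.neighborSet v ∩ {u}).ncard ≤ 1 := by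
    calc (G.neighborSet v ∩ {u}).ncard ≤ ({u} : Set V).ncard :=
          Set.ncard_le_ncard Set.inter_subset_right (Set.toFinite _)
      _ = 1 := Set.ncard_singleton u
  have hXY' : Y ∪ X = ({u, v} : Set V)ᶜ := by rw [Set.union_comm]; exact hXY
  have hXYvu : X ∪ Y = ({v, u} : Set V)ᶜ := by rw [Set.pair_comm]; exact hXY
  have hXYvu' : Y ∪ X = ({v, u} : Set V)ᶜ := by rw [Set.union_comm]; exact hXYvu
  have hsep' : ∀ a ∈ Y, ∀ b ∈ X, ¬ G.Adj a b := fun a ha b hb hadj => hsep b hb a ha hadj.symm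
  -- positivity of the four intersection counts
  have hpa : (G.neighborSet u ∩ X).ncard ≠ 0 := by
    intro h0
    rw [Set.ncard_eq_zero (Set.toFinite _)] at h0
    exact h1 (pos2 huv hXY hd hX hY hsep h0)
  have hpb : (G.neighborSet u ∩ Y).ncard ≠ 0 := by
    intro h0
    rw [Set.ncard_eq_zero (Set.toFinite _)] at h0
    exact h1 (pos2 huv hXY' hd.symm hY hX hsep' h0)
  have hpc : (G.neighborSet v ∩ X).ncard ≠ 0 := by
    intro h0
    rw [Set.ncard_eq_zero (Set.toFinite _)] at h0
    exact h1 (pos2 huv.symm hXYvu hd hX hY hsep h0)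
  have hpd : (G.neighborSet v ∩ Y).ncard ≠ 0 := by
    intro h0
    rw [Set.ncard_eq_zero (Set.toFinite _)] at h0
    exact h1 (pos2 huv.symm hXYvu' hd.symm hY hX hsep' h0)
  have hadj_u : G.Adj u v → (G.neighborSet u ∩ {v}).ncard = 1 := fun h => by
    rw [nbr_inter_singleton_adj h, Set.ncard_singleton]
  have hadj_v : G.Adj u v → (G.neighborSet v ∩ {u}).ncard = 1 := fun h => by
    rw [nbr_inter_singleton_adj h.symm, Set.ncard_singleton]
  by_cases hac : (G.neighborSet u ∩ X).ncard = 1 ∧ (G.neighborSet v ∩ X).ncard = 1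
  · obtain ⟨xu, hxu⟩ := Set.ncard_eq_one.mp hac.1
    obtain ⟨xv, hxv⟩ := Set.ncard_eq_one.mp hac.2
    exact cut_same huv hXY hX hsep hxu hxv
  by_cases hbd : (G.neighborSet u ∩ Y).ncard = 1 ∧ (G.neighborSet v ∩ Y).ncard = 1
  · obtain ⟨yu, hyu⟩ := Set.ncard_eq_one.mp hbd.1
    obtain ⟨yv, hyv⟩ := Set.ncard_eq_one.mp hbd.2
    exact cut_same huv hXY' hY hsep' hyu hyv
  by_cases ha1 : (G.neighborSet u ∩ X).ncard = 1
  · -- then d = 1 and t' = 0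
    have hd1 : (G.neighborSet v ∩ Y).ncard = 1 := by omega
    have hnadj : ¬ G.Adj u v := by
      intro h
      have := hadj_v h
      omega
    obtain ⟨xu, hxu⟩ := Set.ncard_eq_one.mp ha1
    obtain ⟨yv, hyv⟩ := Set.ncard_eq_one.mp hd1
    exact cut_mixed huv hXY hX hsep hnadj hxu hyv
  · -- then b = 1, c = 1, t = 0
    have hb1 : (G.neighborSet u ∩ Y).ncard = 1 := by omega
    have hc1 : (G.neighborSet v ∩ X).ncard = 1 := by omega
    have hnadj : ¬ G.Adj u v := by
      intro h
      have := hadj_u h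
      omega
    obtain ⟨yu, hyu⟩ := Set.ncard_eq_one.mp hb1
    obtain ⟨xv, hxv⟩ := Set.ncard_eq_one.mp hc1
    exact cut_mixed huv hXY' hY hsep' hnadj hyu hxv

lemma econn_pos (hconn : G.Connected)
    (h : 0 ∈ {k | ∃ F : Set (Sym2 V), F ⊆ G.edgeSet ∧ Nat.card F = k ∧
      ¬ (G.deleteEdges F).Connected}) : False := by
  obtain ⟨F, -, hF0, hFdisc⟩ := h
  rw [Nat.card_coe_set_eq, Set.ncard_eq_zero (Set.toFinite _)] at hF0
  subst hF0
  rw [deleteEdges_empty] at hFdisc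
  exact hFdisc hconn

end Cubic

/-- In a connected cubic graph, vertex-connectivity equals edge-connectivity. -/
theorem stmt_1 {V : Type*} [Fintype V] (G : SimpleGraph V)
    (hconn : G.Connected) (hcubic : ∀ v, deg G v = 3) :
    vConn G = eConn G := by
  have hne : Nonempty V := hconn.nonempty
  have hv3 := three_mem_vconn hne hcubic
  have he3 := three_mem_econn hne hcubic
  rw [vConn, eConn]
  have hvle3 : sInf {k | ∃ S : Set V, Nat.card S = k ∧
      (¬ (G.induce Sᶜ).Connected ∨ Nat.card ↥(Sᶜ) ≤ 1)} ≤ 3 := Nat.sInf_le hv3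
  have hele3 : sInf {k | ∃ F : Set (Sym2 V), F ⊆ G.edgeSet ∧ Nat.card F = k ∧
      ¬ (G.deleteEdges F).Connected} ≤ 3 := Nat.sInf_le he3
  have hvmem := Nat.sInf_mem (⟨3, hv3⟩ : Set.Nonempty _)
  have hemem := Nat.sInf_mem (⟨3, he3⟩ : Set.Nonempty _)
  apply le_antisymm
  · -- vConn ≤ eConn
    set e := sInf {k | ∃ F : Set (Sym2 V), F ⊆ G.edgeSet ∧ Nat.card F = k ∧
      ¬ (G.deleteEdges F).Connected} with hedef
    rcases Nat.lt_or_ge e 3 with h3 | h3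
    swap
    · exact hvle3.trans h3
    interval_cases e
    · exact absurd hemem (fun h => econn_pos hconn h)
    · exact Nat.sInf_le (one_mem_vconn hconn hcubic hemem)
    · refine Nat.sInf_le (two_mem_vconn hconn hcubic hemem ?_)
      intro h
      have := Nat.sInf_le h
      omega
  · -- eConn ≤ vConn
    set kk := sInf {k | ∃ S : Set V, Nat.card S = k ∧
      (¬ (G.induce Sᶜ).Connected ∨ Nat.card ↥(Sᶜ) ≤ 1)} with hkdef
    rcases Nat.lt_or_ge kk 3 with h3 | h3
    swap
    · exact hele3.trans h3
    interval_cases kk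
    · exact absurd hvmem (fun h => vconn_pos hconn h hcubic)
    · exact Nat.sInf_le (one_mem_econn hconn hcubic hvmem)
    · refine Nat.sInf_le (two_mem_econn hconn hcubic hvmem ?_)
      intro h
      have := Nat.sInf_le h
      omega
end

section
/- If G is a connected cubic graph with edge-connectivity exactly 2, then there exist two disjoint subgraphs G_L, G_R of G and some k ∈ ℕ such that G is obtained by joining G_L and G_R by a ladder T_k: i.e., there exist vertices u,v ∈ V(G_L) and m,n ∈ V(G_R) such that G is the disjoint union of G_L, T_k, G_R together with the edges (u,x_1),(v,y_1),(m,x_k),(n,y_k) when k ≥ 1, or edges (u,m),(v,n) when k = 0. -/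
open SimpleGraph

variable {V : Type*}

/-- `G` consists of the two disjoint subgraphs induced on `A` and on `B`,
joined by a ladder with rails `x 0 — … — x (k-1)` and `y 0 — … — y (k-1)` and
rungs `x i — y i`, attached at `u, v ∈ A` and `m, n ∈ B`: the connecting edges
are `(u, x 0), (v, y 0), (m, x (k-1)), (n, y (k-1))` when `k ≥ 1`, and
`(u, m), (v, n)` when `k = 0`. -/
def LadderDecomp {V : Type*} (G : SimpleGraph V) (A B : Set V) (k : ℕ)
    (x y : Fin k → V) (u v m n : V) : Prop :=
  u ∈ A ∧ v ∈ A ∧ u ≠ v ∧ m ∈ B ∧ n ∈ B ∧ m ≠ n ∧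
  Function.Injective x ∧ Function.Injective y ∧
  Disjoint A B ∧
  Set.range x ∩ Set.range y = ∅ ∧
  A ∩ (Set.range x ∪ Set.range y) = ∅ ∧
  B ∩ (Set.range x ∪ Set.range y) = ∅ ∧
  A ∪ B ∪ Set.range x ∪ Set.range y = Set.univ ∧
  (∀ i j, G.Adj (x i) (x j) ↔ (i.val + 1 = j.val ∨ j.val + 1 = i.val)) ∧
  (∀ i j, G.Adj (y i) (y j) ↔ (i.val + 1 = j.val ∨ j.val + 1 = i.val)) ∧
  (∀ i j, G.Adj (x i) (y j) ↔ i = j) ∧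
  (∀ a ∈ A, ∀ i, G.Adj a (x i) ↔ (a = u ∧ i.val = 0)) ∧
  (∀ a ∈ A, ∀ i, G.Adj a (y i) ↔ (a = v ∧ i.val = 0)) ∧
  (∀ b ∈ B, ∀ i, G.Adj b (x i) ↔ (b = m ∧ i.val = k - 1)) ∧
  (∀ b ∈ B, ∀ i, G.Adj b (y i) ↔ (b = n ∧ i.val = k - 1)) ∧
  (∀ a ∈ A, ∀ b ∈ B, (G.Adj a b ↔ (k = 0 ∧ ((a = u ∧ b = m) ∨ (a = v ∧ b = n)))))

/-- A set closed under adjacency contains everything reachable from its members. -/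
private lemma reach_closed {K : SimpleGraph V} {S : Set V}
    (hS : ∀ a ∈ S, ∀ b, K.Adj a b → b ∈ S) :
    ∀ {a z : V}, a ∈ S → K.Reachable a z → z ∈ S := by
  intro a z ha h
  obtain ⟨p⟩ := h
  induction p with
  | nil => exact ha
  | cons h' p ih => exact ih (hS _ ha _ h')

/-- If all cross-edges out of `A` leave from a single vertex `w`, toward at most the
two vertices `m ≠ n`, then in a cubic graph with no cut of size ≤ 1 we get a
contradiction. -/
private lemma sideCut [Fintype V] (G : SimpleGraph V)
    (hcubic : ∀ v, deg G v = 3)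
    (hno : ∀ F' : Set (Sym2 V), F' ⊆ G.edgeSet → Nat.card ↥F' ≤ 1 →
      (G.deleteEdges F').Connected)
    (A : Set V) (w m n : V) (hw : w ∈ A) (hm : m ∉ A) (hn : n ∉ A) (hmn : m ≠ n)
    (hadjm : G.Adj w m) (hadjn : G.Adj w n)
    (hcross : ∀ a ∈ A, ∀ b, b ∉ A → G.Adj a b → a = w ∧ (b = m ∨ b = n)) : False := by
  classical
  have hdeg : ({z | G.Adj w z}).ncard = 3 := by
    rw [← Nat.card_coe_set_eq]; exact hcubic w
  by_cases hA : ∃ a ∈ A, a ≠ w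
  · obtain ⟨a, haA, haw⟩ := hA
    have h2' : ({m, n} : Set V) ⊆ {z | G.Adj w z} := by
      rintro z (rfl|rfl)
      · exact hadjm
      · exact hadjn
    have hsubN : A ∩ {z | G.Adj w z} ⊆ {z | G.Adj w z} \ {m, n} := by
      rintro z ⟨hzA, hzN⟩
      refine ⟨hzN, ?_⟩
      rintro (rfl|rfl)
      · exact hm hzA
      · exact hn hzA
    have hcard1 : (A ∩ {z | G.Adj w z}).ncard ≤ 1 := by
      have hd := Set.ncard_diff h2' (Set.toFinite _)
      have := Set.ncard_le_ncard hsubN (Set.toFinite _)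
      rw [hd, hdeg, Set.ncard_pair hmn] at this
      exact this
    set F' := (fun z => s(w, z)) '' (A ∩ {z | G.Adj w z}) with hF'
    have hF'sub : F' ⊆ G.edgeSet := by
      rintro e ⟨z, ⟨_, hz⟩, rfl⟩
      exact hz
    have hF'card : Nat.card ↥F' ≤ 1 := by
      rw [Nat.card_coe_set_eq]
      exact le_trans Set.ncard_image_le hcard1
    have hcon := hno F' hF'sub hF'card
    have hr : (G.deleteEdges F').Reachable a w := hcon.preconnected a w
    have hmem : w ∈ A \ {w} := by
      refine reach_closed ?_ (⟨haA, by simpa using haw⟩ : a ∈ A \ {w}) hr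
      rintro c ⟨hcA, hcw⟩ d hcd
      rw [deleteEdges_adj] at hcd
      obtain ⟨hadj, hnotF⟩ := hcd
      have hcw' : c ≠ w := by simpa using hcw
      have hdA : d ∈ A := by
        by_contra hdB
        exact hcw' (hcross c hcA d hdB hadj).1
      have hdw : d ≠ w := by
        rintro rfl
        exact hnotF ⟨c, ⟨hcA, hadj.symm⟩, Sym2.eq_swap⟩
      exact ⟨hdA, by simpa using hdw⟩
    exact hmem.2 rfl
  · push_neg at hA
    have hsub2 : {z | G.Adj w z} ⊆ {m, n} := by
      intro z hz
      by_cases hzA : z ∈ A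
      · exact absurd (hA z hzA) hz.ne'
      · rcases (hcross w hw z hzA hz).2 with rfl|rfl
        · exact Set.mem_insert _ _
        · exact Set.mem_insert_of_mem _ rfl
    have : (3:ℕ) ≤ 2 := by
      calc (3:ℕ) = ({z | G.Adj w z}).ncard := hdeg.symm
        _ ≤ ({m, n} : Set V).ncard := Set.ncard_le_ncard hsub2 (Set.toFinite _)
        _ = 2 := Set.ncard_pair hmn
    omega

/-- Assembly: given a 2-edge-cut `{s(u,m), s(v,n)}` with `u,v ∈ A`, `m,n ∉ A`,
we get a k = 0 ladder decomposition. -/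
private lemma assemble [Fintype V] (G : SimpleGraph V)
    (hcubic : ∀ v, deg G v = 3)
    (hno : ∀ F' : Set (Sym2 V), F' ⊆ G.edgeSet → Nat.card ↥F' ≤ 1 →
      (G.deleteEdges F').Connected)
    (u m v n : V) (hne_e : s(u,m) ≠ s(v,n))
    (hadj_um : G.Adj u m) (hadj_vn : G.Adj v n) (A : Set V)
    (hu : u ∈ A) (hv : v ∈ A) (hm : m ∉ A) (hn : n ∉ A)
    (hcross : ∀ a ∈ A, ∀ b, b ∉ A → G.Adj a b → (a = u ∧ b = m) ∨ (a = v ∧ b = n)) :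
    ∃ (A B : Set V) (k : ℕ) (x y : Fin k → V) (u v m n : V),
      LadderDecomp G A B k x y u v m n := by
  have huv : u ≠ v := by
    rintro rfl
    have hmn : m ≠ n := by rintro rfl; exact hne_e rfl
    refine sideCut G hcubic hno A u m n hu hm hn hmn hadj_um hadj_vn ?_
    intro a ha b hb hab
    rcases hcross a ha b hb hab with ⟨rfl, rfl⟩ | ⟨rfl, rfl⟩
    · exact ⟨rfl, Or.inl rfl⟩
    · exact ⟨rfl, Or.inr rfl⟩
  have hmn : m ≠ n := by
    rintro rfl
    refine sideCut G hcubic hno Aᶜ m u v hm (by simpa using hu) (by simpa using hv)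
      huv hadj_um.symm hadj_vn.symm ?_
    intro a ha b hb hab
    have hbA : b ∈ A := by simpa using hb
    rcases hcross b hbA a ha hab.symm with ⟨rfl, rfl⟩ | ⟨rfl, rfl⟩
    · exact ⟨rfl, Or.inl rfl⟩
    · exact ⟨rfl, Or.inr rfl⟩
  refine ⟨A, Aᶜ, 0, Fin.elim0, Fin.elim0, u, v, m, n,
    hu, hv, huv, hm, hn, hmn,
    fun i => i.elim0, fun i => i.elim0,
    disjoint_compl_right, by simp, by simp, by simp,
    by simp,
    fun i => i.elim0, fun i => i.elim0, fun i => i.elim0,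
    fun a _ i => i.elim0, fun a _ i => i.elim0,
    fun b _ i => i.elim0, fun b _ i => i.elim0, ?_⟩
  intro a ha b hb
  constructor
  · intro hab
    exact ⟨rfl, hcross a ha b hb hab⟩
  · rintro ⟨-, (⟨rfl, rfl⟩|⟨rfl, rfl⟩)⟩
    · exact hadj_um
    · exact hadj_vn

/-- Every connected cubic graph with edge-connectivity exactly 2 decomposes as
two disjoint subgraphs joined by a ladder `T_k` for some `k ∈ ℕ`. -/
theorem stmt_13 {V : Type*} [Fintype V] (G : SimpleGraph V)
    (hconn : G.Connected) (hcubic : ∀ v, deg G v = 3) (h2 : eConn G = 2) :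
    ∃ (A B : Set V) (k : ℕ) (x y : Fin k → V) (u v m n : V),
      LadderDecomp G A B k x y u v m n := by
  classical
  have hne : Nonempty V := hconn.nonempty
  set S : Set ℕ := {k | ∃ F : Set (Sym2 V), F ⊆ G.edgeSet ∧ Nat.card F = k ∧
    ¬ (G.deleteEdges F).Connected} with hSdef
  have h2' : sInf S = 2 := h2
  have hSne : S.Nonempty := by
    by_contra h
    rw [Set.not_nonempty_iff_eq_empty] at h
    rw [h, Nat.sInf_empty] at h2'
    omega
  have hno : ∀ F' : Set (Sym2 V), F' ⊆ G.edgeSet → Nat.card ↥F' ≤ 1 →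
      (G.deleteEdges F').Connected := by
    intro F' hsub hcard
    by_contra hc
    have hmem : Nat.card ↥F' ∈ S := ⟨F', hsub, rfl, hc⟩
    have := Nat.sInf_le hmem
    omega
  have hS2 : 2 ∈ S := h2' ▸ Nat.sInf_mem hSne
  obtain ⟨F, hFsub, hFcard, hFdisc⟩ := hS2
  have hF2 : F.ncard = 2 := by rw [← Nat.card_coe_set_eq]; exact hFcard
  obtain ⟨e1, e2, h12, rfl⟩ := Set.ncard_eq_two.mp hF2
  clear hF2 hFcard
  revert h12 hFsub hFdisc
  induction e1 using Sym2.ind with | _ u m => ?_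
  induction e2 using Sym2.ind with | _ v n => ?_
  intro h12 hFsub hFdisc
  set H := G.deleteEdges {s(u,m), s(v,n)} with hH
  have hadj_um : G.Adj u m := hFsub (by left; rfl)
  have hadj_vn : G.Adj v n := hFsub (by right; rfl)
  have hsingle : ∀ e ∈ ({s(u,m), s(v,n)} : Set (Sym2 V)),
      (G.deleteEdges {e}).Connected := by
    intro e he
    refine hno {e} (by intro x hx; rw [Set.mem_singleton_iff] at hx; exact hx ▸ hFsub he) ?_
    rw [Nat.card_coe_set_eq, Set.ncard_singleton]
  have hD2conn : (G.deleteEdges {s(v,n)}).Connected := hsingle _ (by right; rfl)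
  have hD1conn : (G.deleteEdges {s(u,m)}).Connected := hsingle _ (by left; rfl)
  set A : Set V := {w | H.Reachable u w} with hA
  have hHadj : ∀ {a b : V}, G.Adj a b → s(a,b) ≠ s(u,m) → s(a,b) ≠ s(v,n) → H.Adj a b := by
    intro a b hab h1 h2
    rw [hH, deleteEdges_adj]
    refine ⟨hab, ?_⟩
    rintro (h|h)
    · exact h1 h
    · exact h2 h
  -- dichotomy: every vertex is H-reachable from u or from m
  have hdi : ∀ z, H.Reachable u z ∨ H.Reachable m z := by
    intro z
    have hr : (G.deleteEdges {s(v,n)}).Reachable u z := hD2conn.preconnected u z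
    refine reach_closed (S := {w | H.Reachable u w ∨ H.Reachable m w}) ?_
      (Or.inl (Reachable.refl u)) hr
    intro a ha b hab
    rw [deleteEdges_adj] at hab
    obtain ⟨hab, hb2⟩ := hab
    by_cases he : s(a,b) = s(u,m)
    · rcases Sym2.eq_iff.mp he with ⟨rfl, rfl⟩ | ⟨rfl, rfl⟩
      · exact Or.inr (Reachable.refl _)
      · exact Or.inl (Reachable.refl _)
    · have hAdj : H.Adj a b := hHadj hab he (by simpa using hb2)
      rcases ha with h|h
      · exact Or.inl (h.trans hAdj.reachable)
      · exact Or.inr (h.trans hAdj.reachable)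
  have hm_notA : m ∉ A := by
    intro hum
    apply hFdisc
    rw [(G.deleteEdges {s(u,m), s(v,n)}).connected_iff]
    refine ⟨?_, hne⟩
    intro a b
    have ha : H.Reachable u a := (hdi a).elim id (fun h => hum.trans h)
    have hb : H.Reachable u b := (hdi b).elim id (fun h => hum.trans h)
    exact ha.symm.trans hb
  have hVN : ¬ H.Reachable v n := by
    intro hvn
    apply hm_notA
    have hr : (G.deleteEdges {s(u,m)}).Reachable u m := hD1conn.preconnected u m
    refine reach_closed (S := A) ?_ (Reachable.refl u) hr
    intro a ha b hab
    rw [deleteEdges_adj] at hab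
    obtain ⟨hab, hb1⟩ := hab
    by_cases he : s(a,b) = s(v,n)
    · rcases Sym2.eq_iff.mp he with ⟨rfl, rfl⟩ | ⟨rfl, rfl⟩
      · exact ha.trans hvn
      · exact ha.trans hvn.symm
    · exact ha.trans (hHadj hab (by simpa using hb1) he).reachable
  have hcrossF : ∀ a ∈ A, ∀ b, b ∉ A → G.Adj a b →
      s(a,b) = s(u,m) ∨ s(a,b) = s(v,n) := by
    intro a ha b hb hab
    by_contra hc
    push_neg at hc
    exact hb (ha.trans (hHadj hab hc.1 hc.2).reachable)
  have huA : u ∈ A := Reachable.refl u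
  -- place v and n
  by_cases hvA : v ∈ A
  · have hnA : n ∉ A := by
      intro hnA
      exact hVN ((hvA : H.Reachable u v).symm.trans hnA)
    refine assemble G hcubic hno u m v n h12 hadj_um hadj_vn A huA hvA hm_notA hnA ?_
    intro a ha b hb hab
    rcases hcrossF a ha b hb hab with h | h
    · rcases Sym2.eq_iff.mp h with ⟨rfl, rfl⟩ | ⟨rfl, rfl⟩
      · exact Or.inl ⟨rfl, rfl⟩
      · exact absurd ha hm_notA
    · rcases Sym2.eq_iff.mp h with ⟨rfl, rfl⟩ | ⟨rfl, rfl⟩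
      · exact Or.inr ⟨rfl, rfl⟩
      · exact absurd ha hnA
  · have hnA : n ∈ A := by
      by_contra hnA
      have h1 : H.Reachable m v := (hdi v).resolve_left hvA
      have h2 : H.Reachable m n := (hdi n).resolve_left hnA
      exact hVN (h1.symm.trans h2)
    refine assemble G hcubic hno u m n v (by rw [Sym2.eq_swap (a := n)]; exact h12)
      hadj_um hadj_vn.symm A huA hnA hm_notA hvA ?_
    intro a ha b hb hab
    rcases hcrossF a ha b hb hab with h | h
    · rcases Sym2.eq_iff.mp h with ⟨rfl, rfl⟩ | ⟨rfl, rfl⟩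
      · exact Or.inl ⟨rfl, rfl⟩
      · exact absurd ha hm_notA
    · rcases Sym2.eq_iff.mp h with ⟨rfl, rfl⟩ | ⟨rfl, rfl⟩
      · exact absurd ha hvA
      · exact Or.inr ⟨rfl, rfl⟩
end

section
/- The cube graph Q_3 (the 3-dimensional hypercube) has matching book thickness 3, i.e., it is dispersable. -/
open SimpleGraph

variable {V : Type*}

/-- A matching book embedding of `G` in `n` pages: the vertices are placed
injectively on a spine (the natural numbers), each edge is assigned a page,
no two edges on a common page cross (their endpoints do not interleave in the
spine order), and on each page every vertex is incident to at most one edge. -/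
structure MatchingBookEmbedding (G : SimpleGraph V) (n : ℕ) where
  pos : V ↪ ℕ
  page : Sym2 V → Fin n
  nocross : ∀ a b x y, G.Adj a b → G.Adj x y → page s(a,b) = page s(x,y) →
    ¬ (pos a < pos x ∧ pos x < pos b ∧ pos b < pos y)
  matching : ∀ v a b, G.Adj v a → G.Adj v b → a ≠ b → page s(v,a) ≠ page s(v,b)

/-- The matching book thickness: the least number of pages of a matching book
embedding. -/
noncomputable def mbt (G : SimpleGraph V) : ℕ :=
  sInf {n | Nonempty (MatchingBookEmbedding G n)}

/-- The 3-dimensional hypercube graph `Q₃`: vertices are triples of bits,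
adjacent iff they differ in exactly one coordinate. -/
def cubeQ3 : SimpleGraph (Fin 3 → Bool) where
  Adj u v := ∃! i, u i ≠ v i
  symm := by
    constructor
    rintro u v ⟨i, hi, hu⟩
    exact ⟨i, Ne.symm hi, fun j hj => hu j (Ne.symm hj)⟩
  loopless := by
    constructor
    rintro u ⟨i, hi, -⟩
    exact hi rfl

/-- Gray-code position of a vertex of the cube on the spine. -/
def grayPos (v : Fin 3 → Bool) : ℕ :=
  4 * (if v 0 then 1 else 0) + 2 * (if xor (v 0) (v 1) then 1 else 0)
    + (if xor (xor (v 0) (v 1)) (v 2) then 1 else 0)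

/-- Page of an edge: the first coordinate where the endpoints differ. -/
def grayPage (u v : Fin 3 → Bool) : Fin 3 :=
  if u 0 ≠ v 0 then 0 else if u 1 ≠ v 1 then 1 else 2

instance : DecidableRel cubeQ3.Adj :=
  fun u v =>
    decidable_of_iff (∃ i, u i ≠ v i ∧ ∀ j, u j ≠ v j → j = i) Iff.rfl

theorem grayPos_inj : Function.Injective grayPos := by decide

theorem grayPage_symm : ∀ u v, grayPage u v = grayPage v u := by decide

set_option synthInstance.maxHeartbeats 1000000 in
set_option synthInstance.maxSize 2000 in
theorem gray_nocross : ∀ a b x y : Fin 3 → Bool, cubeQ3.Adj a b → cubeQ3.Adj x y →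
    grayPage a b = grayPage x y →
    ¬ (grayPos a < grayPos x ∧ grayPos x < grayPos b ∧ grayPos b < grayPos y) := by decide

theorem gray_matching : ∀ v a b : Fin 3 → Bool, cubeQ3.Adj v a → cubeQ3.Adj v b → a ≠ b →
    grayPage v a ≠ grayPage v b := by decide

/-- The cube `Q₃` has matching book thickness 3, i.e. it is dispersable. -/
theorem stmt_14 : mbt cubeQ3 = 3 := by
  have h3 : 3 ∈ {n | Nonempty (MatchingBookEmbedding cubeQ3 n)} := by
    exact ⟨⟨⟨grayPos, grayPos_inj⟩, Sym2.lift ⟨grayPage, grayPage_symm⟩,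
      fun a b x y h1 h2 h3 => gray_nocross a b x y h1 h2 h3,
      fun v a b h1 h2 h3 => gray_matching v a b h1 h2 h3⟩⟩
  refine le_antisymm (Nat.sInf_le h3) (le_csInf ⟨3, h3⟩ ?_)
  rintro m ⟨E⟩
  set v : Fin 3 → Bool := fun _ => false with hv
  set a0 : Fin 3 → Bool := fun i => i = 0 with ha0
  set a1 : Fin 3 → Bool := fun i => i = 1 with ha1
  set a2 : Fin 3 → Bool := fun i => i = 2 with ha2
  have hA0 : cubeQ3.Adj v a0 := by decide
  have hA1 : cubeQ3.Adj v a1 := by decide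
  have hA2 : cubeQ3.Adj v a2 := by decide
  have h01 : E.page s(v,a0) ≠ E.page s(v,a1) := E.matching v a0 a1 hA0 hA1 (by decide)
  have h02 : E.page s(v,a0) ≠ E.page s(v,a2) := E.matching v a0 a2 hA0 hA2 (by decide)
  have h12 : E.page s(v,a1) ≠ E.page s(v,a2) := E.matching v a1 a2 hA1 hA2 (by decide)
  have hcard : ({E.page s(v,a0), E.page s(v,a1), E.page s(v,a2)} : Finset (Fin m)).card = 3 := by
    rw [Finset.card_insert_of_notMem (by simp [h01, h02]),
      Finset.card_insert_of_notMem (by simp [h12]), Finset.card_singleton]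
  calc 3 = _ := hcard.symm
    _ ≤ Finset.univ.card := Finset.card_le_univ _
    _ = m := by simp
end

section
/- Every tree T with maximum degree Δ has matching book thickness Δ, i.e., trees are dispersable. -/
open SimpleGraph

variable {V : Type*}

lemma deg_eq_ncard (G : SimpleGraph V) (v : V) : deg G v = {w | G.Adj v w}.ncard :=
  (Nat.card_coe_set_eq _)

/-- Any finite acyclic graph with an edge has a leaf (a vertex with a unique
neighbour). -/
lemma exists_leaf [Fintype V] {G : SimpleGraph V} (hG : G.IsAcyclic)
    (hne : G.edgeSet.Nonempty) :
    ∃ ℓ u, G.Adj ℓ u ∧ ∀ w, G.Adj ℓ w → w = u := by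
  classical
  obtain ⟨e, he⟩ := hne
  have hadj : ∃ a b : V, G.Adj a b := by
    induction e using Sym2.ind with
    | _ a b => exact ⟨a, b, he⟩
  obtain ⟨v₀, w₀, hvw⟩ := hadj
  set S : Set ℕ := {k | ∃ (x y : V) (p : G.Walk x y), p.IsPath ∧ p.length = k} with hS
  have hbdd : BddAbove S := by
    refine ⟨Fintype.card V, ?_⟩
    rintro k ⟨x, y, p, hp, rfl⟩
    exact hp.length_lt.le
  have h1 : (1 : ℕ) ∈ S := by
    refine ⟨v₀, w₀, Walk.cons hvw Walk.nil, ?_, rfl⟩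
    simp [Walk.cons_isPath_iff, hvw.ne]
  obtain ⟨x, y, p, hp, hlen⟩ := Nat.sSup_mem ⟨1, h1⟩ hbdd
  have hk1 : 1 ≤ sSup S := le_csSup hbdd h1
  cases p with
  | nil => simp only [Walk.length_nil] at hlen; omega
  | @cons _ z _ h q =>
    refine ⟨x, z, h, fun w hw => ?_⟩
    by_contra hwz
    have hq : q.IsPath := hp.of_cons
    have hxq : x ∉ q.support := ((Walk.cons_isPath_iff h q).mp hp).2
    have hwx : w ≠ x := fun h' => G.irrefl (h' ▸ hw)
    by_cases hsupp : w ∈ q.support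
    · -- build a cycle
      set q' := q.takeUntil w hsupp with hq'def
      have hq' : q'.IsPath := hq.takeUntil hsupp
      have hxq' : x ∉ q'.support := fun hx => hxq (Walk.support_takeUntil_subset _ hsupp hx)
      have hr : (Walk.cons h q').IsPath := (Walk.cons_isPath_iff h q').mpr ⟨hq', hxq'⟩
      have hcyc : (Walk.cons hw.symm (Walk.cons h q')).IsCycle := by
        refine (Walk.cons_isCycle_iff _ hw.symm).mpr ⟨hr, ?_⟩
        intro hmemE
        rw [Walk.edges_cons] at hmemE
        rcases List.mem_cons.mp hmemE with heq | hmemE'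
        · rw [Sym2.eq_iff] at heq
          rcases heq with ⟨h1', _⟩ | ⟨h1', _⟩
          · exact hwx h1'
          · exact hwz h1'
        · exact hxq' (Walk.snd_mem_support_of_mem_edges q' hmemE')
      exact hG _ hcyc
    · -- extend the longest path
      have hwp : w ∉ (Walk.cons h q).support := by
        rw [Walk.support_cons]
        intro hmem
        rcases List.mem_cons.mp hmem with h' | h'
        · exact hwx h'
        · exact hsupp h'
      have hp' : (Walk.cons hw.symm (Walk.cons h q)).IsPath :=
        (Walk.cons_isPath_iff _ _).mpr ⟨hp, hwp⟩
      have hmemS : (sSup S) + 1 ∈ S := by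
        refine ⟨w, y, Walk.cons hw.symm (Walk.cons h q), hp', ?_⟩
        simp [Walk.length_cons, hlen]
      have := le_csSup hbdd hmemS
      omega

/-- The key construction: every finite forest with maximum degree at most `n`
(`n ≥ 1`) has a matching book embedding into `n` pages. -/
lemma exists_mbe [Fintype V] (n : ℕ) (hn : 1 ≤ n) :
    ∀ (m : ℕ) (G : SimpleGraph V), G.IsAcyclic → (∀ v, deg G v ≤ n) →
      G.edgeSet.ncard = m → Nonempty (MatchingBookEmbedding G n) := by
  classical
  intro m
  induction m using Nat.strong_induction_on with
  | _ m ih =>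
  intro G hG hdeg hcard
  rcases Set.eq_empty_or_nonempty G.edgeSet with hE | hE
  · -- no edges at all
    have hadj : ∀ {a b : V}, ¬ G.Adj a b := by
      intro a b h
      have : s(a, b) ∈ G.edgeSet := G.mem_edgeSet.mpr h
      rw [hE] at this
      exact this
    exact ⟨{ pos := (Fintype.equivFin V).toEmbedding.trans Fin.valEmbedding
             page := fun _ => ⟨0, hn⟩
             nocross := fun a b x y h _ _ _ => hadj h
             matching := fun v a b h _ _ _ => hadj h }⟩
  · obtain ⟨ℓ, u, hlu, huniq⟩ := exists_leaf hG hE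
    have hℓu : ℓ ≠ u := hlu.ne
    set e₀ : Sym2 V := s(ℓ, u) with he₀def
    set G' := G.deleteEdges {e₀} with hG'def
    have he₀ : e₀ ∈ G.edgeSet := G.mem_edgeSet.mpr hlu
    have hG'adj : ∀ {a b : V}, G'.Adj a b ↔ G.Adj a b ∧ s(a, b) ≠ e₀ := by
      intro a b
      rw [hG'def, deleteEdges_adj, Set.mem_singleton_iff]
    have hG'acyc : G'.IsAcyclic := by
      intro v c hc
      exact hG (c.mapLe (G.deleteEdges_le _)) (hc.mapLe _)
    have hG'sub : ∀ v : V, {w | G'.Adj v w} ⊆ {w | G.Adj v w} := by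
      intro v w hw
      exact (hG'adj.mp hw).1
    have hdeg' : ∀ v, deg G' v ≤ n := by
      intro v
      refine le_trans ?_ (hdeg v)
      rw [deg_eq_ncard, deg_eq_ncard]
      exact Set.ncard_le_ncard (hG'sub v) (Set.toFinite _)
    have hcard' : G'.edgeSet.ncard < m := by
      have hss : G'.edgeSet ⊂ G.edgeSet := by
        rw [hG'def, edgeSet_deleteEdges]
        exact (Set.ssubset_iff_of_subset Set.diff_subset).mpr
          ⟨e₀, he₀, fun h => h.2 rfl⟩
      calc G'.edgeSet.ncard < G.edgeSet.ncard := Set.ncard_lt_ncard hss (Set.toFinite _)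
        _ = m := hcard
    obtain ⟨B⟩ := ih _ hcard' G' hG'acyc hdeg' rfl
    set p := B.pos u with hpdef
    -- pick a colour unused at `u`
    set N : Finset V := (Set.toFinite {w | G'.Adj u w}).toFinset with hNdef
    set S : Finset (Fin n) := N.image (fun w => B.page s(u, w)) with hSdef
    have hdegu : deg G' u < deg G u := by
      rw [deg_eq_ncard, deg_eq_ncard]
      refine Set.ncard_lt_ncard ?_ (Set.toFinite _)
      refine (Set.ssubset_iff_of_subset (hG'sub u)).mpr ⟨ℓ, hlu.symm, ?_⟩
      intro hmem
      exact (hG'adj.mp hmem).2 (Sym2.eq_swap)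
    have hScard : S.card < n := by
      have h1 : S.card ≤ N.card := Finset.card_image_le
      have h2 : N.card = deg G' u := by
        rw [deg_eq_ncard, hNdef, Set.ncard_eq_toFinset_card' ]
        simp
      have := hdeg u
      omega
    obtain ⟨c₀, hc₀⟩ : ∃ c : Fin n, c ∉ S := by
      by_contra hcon
      push_neg at hcon
      have hsub : (Finset.univ : Finset (Fin n)) ⊆ S := fun c _ => hcon c
      have := Finset.card_le_card hsub
      rw [Finset.card_univ, Fintype.card_fin] at this
      omega
    -- the new data
    have hposinj : Function.Injective
        (fun v : V => if v = ℓ then 2 * p + 1 else 2 * B.pos v) := by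
      intro a b hab
      simp only at hab
      by_cases ha : a = ℓ <;> by_cases hb : b = ℓ
      · rw [ha, hb]
      · rw [if_pos ha, if_neg hb] at hab; omega
      · rw [if_neg ha, if_pos hb] at hab; omega
      · rw [if_neg ha, if_neg hb] at hab
        exact B.pos.injective (by omega)
    set pos : V ↪ ℕ := ⟨fun v => if v = ℓ then 2 * p + 1 else 2 * B.pos v, hposinj⟩
      with hposdef
    set page : Sym2 V → Fin n := fun s => if s = e₀ then c₀ else B.page s with hpagedef
    have hposℓ : pos ℓ = 2 * p + 1 := if_pos rfl
    have hposne : ∀ {v : V}, v ≠ ℓ → pos v = 2 * B.pos v := fun hv => if_neg hv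
    have hposu : pos u = 2 * p := by
      rw [hposne (Ne.symm hℓu), hpdef]
    have hedge' : ∀ {a b : V}, G.Adj a b → s(a, b) ≠ e₀ → G'.Adj a b :=
      fun h hne => hG'adj.mpr ⟨h, hne⟩
    have hpage' : ∀ {s : Sym2 V}, s ≠ e₀ → page s = B.page s := fun hs => if_neg hs
    have hpage₀ : ∀ {s : Sym2 V}, s = e₀ → page s = c₀ := fun hs => if_pos hs
    have hnotℓ : ∀ {c d : V}, G.Adj c d → s(c, d) ≠ e₀ → c ≠ ℓ ∧ d ≠ ℓ := by
      intro c d hcd hne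
      constructor
      · intro hc
        apply hne
        have hd : d = u := huniq d (hc ▸ hcd)
        rw [hc, hd, he₀def]
      · intro hd
        apply hne
        have hc : c = u := huniq c (hd ▸ hcd.symm)
        rw [hc, hd, he₀def]
        exact Sym2.eq_swap
    have he₀cases : ∀ {c d : V}, s(c, d) = e₀ → (c = ℓ ∧ d = u) ∨ (c = u ∧ d = ℓ) := by
      intro c d hcd
      rw [he₀def, Sym2.eq_iff] at hcd
      exact hcd
    refine ⟨{ pos := pos, page := page, nocross := ?_, matching := ?_ }⟩
    · -- nocross
      rintro a b x y hab hxy hpq ⟨h1, h2, h3⟩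
      by_cases hab0 : s(a, b) = e₀
      · rcases he₀cases hab0 with ⟨ha1, hb1⟩ | ⟨ha1, hb1⟩
        · -- a = ℓ, b = u
          have e1 : pos a = 2 * p + 1 := by rw [ha1]; exact hposℓ
          have e2 : pos b = 2 * p := by rw [hb1]; exact hposu
          omega
        · -- a = u, b = ℓ
          have e1 : pos a = 2 * p := by rw [ha1]; exact hposu
          have e2 : pos b = 2 * p + 1 := by rw [hb1]; exact hposℓ
          by_cases hx : x = ℓ
          · have e3 : pos x = 2 * p + 1 := by rw [hx]; exact hposℓ
            omega
          · have e3 : pos x = 2 * B.pos x := hposne hx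
            omega
      · by_cases hxy0 : s(x, y) = e₀
        · rcases he₀cases hxy0 with ⟨hx1, hy1⟩ | ⟨hx1, hy1⟩
          · -- x = ℓ, y = u
            have e1 : pos x = 2 * p + 1 := by rw [hx1]; exact hposℓ
            have e2 : pos y = 2 * p := by rw [hy1]; exact hposu
            omega
          · -- x = u, y = ℓ
            have e1 : pos x = 2 * p := by rw [hx1]; exact hposu
            have e2 : pos y = 2 * p + 1 := by rw [hy1]; exact hposℓ
            by_cases hb : b = ℓ
            · have e3 : pos b = 2 * p + 1 := by rw [hb]; exact hposℓ
              omega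
            · have e3 : pos b = 2 * B.pos b := hposne hb
              omega
        · -- neither edge is the removed one
          obtain ⟨ha, hb⟩ := hnotℓ hab hab0
          obtain ⟨hx, hy⟩ := hnotℓ hxy hxy0
          have ea : pos a = 2 * B.pos a := hposne ha
          have eb : pos b = 2 * B.pos b := hposne hb
          have ex : pos x = 2 * B.pos x := hposne hx
          have ey : pos y = 2 * B.pos y := hposne hy
          rw [hpage' hab0, hpage' hxy0] at hpq
          exact B.nocross a b x y (hedge' hab hab0) (hedge' hxy hxy0) hpq
            ⟨by omega, by omega, by omega⟩
    · -- matching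
      intro v a b hva hvb hab hpq
      by_cases h1 : s(v, a) = e₀ <;> by_cases h2 : s(v, b) = e₀
      · rcases he₀cases h1 with ⟨hv1, ha1⟩ | ⟨hv1, ha1⟩ <;>
          rcases he₀cases h2 with ⟨hv2, hb1⟩ | ⟨hv2, hb1⟩
        · exact hab (ha1.trans hb1.symm)
        · exact hℓu (hv1.symm.trans hv2)
        · exact hℓu (hv2.symm.trans hv1)
        · exact hab (ha1.trans hb1.symm)
      · rcases he₀cases h1 with ⟨hv1, ha1⟩ | ⟨hv1, ha1⟩
        · -- v = ℓ, a = u : then b = u as well, contradiction with a ≠ b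
          have hb' : b = u := huniq b (hv1 ▸ hvb)
          exact hab (ha1.trans hb'.symm)
        · -- v = u, a = ℓ
          have hpa : page s(v, a) = c₀ := hpage₀ h1
          have hbadj : G'.Adj v b := hedge' hvb h2
          have hpb : page s(v, b) = B.page s(v, b) := hpage' h2
          have hmem : B.page s(v, b) ∈ S := by
            rw [hSdef]
            refine Finset.mem_image.mpr ⟨b, ?_, ?_⟩
            · rw [hNdef, Set.Finite.mem_toFinset]
              exact hv1 ▸ hbadj
            · rw [hv1]
          rw [hpa, hpb] at hpq
          exact hc₀ (hpq ▸ hmem)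
      · rcases he₀cases h2 with ⟨hv2, hb1⟩ | ⟨hv2, hb1⟩
        · have ha' : a = u := huniq a (hv2 ▸ hva)
          exact hab (ha'.trans hb1.symm)
        · have hpb : page s(v, b) = c₀ := hpage₀ h2
          have haadj : G'.Adj v a := hedge' hva h1
          have hpa : page s(v, a) = B.page s(v, a) := hpage' h1
          have hmem : B.page s(v, a) ∈ S := by
            rw [hSdef]
            refine Finset.mem_image.mpr ⟨a, ?_, ?_⟩
            · rw [hNdef, Set.Finite.mem_toFinset]
              exact hv2 ▸ haadj
            · rw [hv2]
          rw [hpa, hpb] at hpq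
          exact hc₀ (hpq.symm ▸ hmem)
      · rw [hpage' h1, hpage' h2] at hpq
        exact B.matching v a b (hedge' hva h1) (hedge' hvb h2) hab hpq

/-- Every tree with at least one edge has matching book thickness equal to its
maximum degree, i.e. trees are dispersable. -/
theorem stmt_17 {V : Type*} [Fintype V] (T : SimpleGraph V) [DecidableRel T.Adj]
    (hconn : T.Connected) (hacyc : T.IsAcyclic) (hne : T.edgeSet.Nonempty) :
    mbt T = T.maxDegree := by
  classical
  obtain ⟨e, he⟩ := hne
  have hadj : ∃ a b : V, T.Adj a b := by
    induction e using Sym2.ind with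
    | _ a b => exact ⟨a, b, he⟩
  obtain ⟨v₀, w₀, hvw⟩ := hadj
  haveI : Nonempty V := ⟨v₀⟩
  have hdeg_eq : ∀ v : V, deg T v = T.degree v := by
    intro v
    rw [deg, Nat.card_eq_fintype_card]
    exact T.card_neighborSet_eq_degree v
  have hΔ1 : 1 ≤ T.maxDegree := by
    have h0 : 0 < T.degree v₀ := T.degree_pos_iff_exists_adj v₀ |>.mpr ⟨w₀, hvw⟩
    exact lt_of_lt_of_le h0 (T.degree_le_maxDegree v₀)
  have hmem : T.maxDegree ∈ {n | Nonempty (MatchingBookEmbedding T n)} := by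
    refine exists_mbe _ hΔ1 _ T hacyc ?_ rfl
    intro v
    rw [hdeg_eq v]
    exact T.degree_le_maxDegree v
  have hlb : ∀ k ∈ {n | Nonempty (MatchingBookEmbedding T n)}, T.maxDegree ≤ k := by
    rintro k ⟨B⟩
    obtain ⟨v, hv⟩ := T.exists_maximal_degree_vertex
    have hinj : Function.Injective (fun w : T.neighborSet v => B.page s(v, (w : V))) := by
      rintro ⟨w₁, hw₁⟩ ⟨w₂, hw₂⟩ h
      by_contra hne
      exact B.matching v w₁ w₂ hw₁ hw₂ (fun h' => hne (Subtype.ext h')) h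
    have := Fintype.card_le_of_injective _ hinj
    rw [T.card_neighborSet_eq_degree, Fintype.card_fin] at this
    omega
  refine le_antisymm (Nat.sInf_le hmem) (le_csInf ⟨_, hmem⟩ hlb)
end
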